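/- Let X̂, X ∈ ℝ^{n×d} be matrices all of whose rows are nonzero, and let W ∈ O(d) be an orthogonal matrix. Let D(Z) denote the diagonal matrix whose i-th diagonal entry is the Euclidean norm of the i-th row of Z, and let P(Z) = D(Z)^{−1} Z denote the matrix whose rows are the rows of Z projected onto the unit sphere. Then ‖ P(X̂) W − P(X) ‖_F ≤ 2 ‖ X̂ W − X ‖_F ‖ D(X̂)^{−1} ‖, where ‖ D(X̂)^{−1} ‖ = 1 / min_i ‖X̂_i‖ is the spectral norm of D(X̂)^{−1}. -/

import Mathlib

/-! Work row by row. An orthogonal `W` preserves row norms, so `𝒫(X̂) W = 𝒫(X̂ W)`. For rows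
`u ≠ 0` and `v`, `u/‖u‖ - v/‖v‖ = (u - v)/‖u‖ + (1/‖u‖ - 1/‖v‖) v`, and the second term has norm
`|‖v‖ - ‖u‖|/‖u‖ ≤ ‖u - v‖/‖u‖`; hence each row of `𝒫(X̂ W) - 𝒫(X)` is at most
`2 ‖D(X̂)⁻¹‖` times the corresponding row of `X̂ W - X`, and summing squares gives the bound. -/

open MeasureTheory Matrix Filter ProbabilityTheory

noncomputable section

/-- Frobenius norm of a real matrix. -/
def frob {m n : ℕ} (M : Matrix (Fin m) (Fin n) ℝ) : ℝ :=
  Real.sqrt (∑ i, ∑ j, (M i j) ^ 2)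

open Classical in
/-- Sort a finite family of reals in decreasing order. -/
def sortedDesc {n : ℕ} (f : Fin n → ℝ) : List ℝ :=
  (List.ofFn f).mergeSort (fun a b => decide (b ≤ a))

/-- The k-th largest singular value (1-indexed) of a real square matrix;
`0` if `k` exceeds the dimension. -/
def sval {n : ℕ} (M : Matrix (Fin n) (Fin n) ℝ) (k : ℕ) : ℝ :=
  (sortedDesc fun i =>
    Real.sqrt ((show (Mᵀ * M).IsHermitian by
      simpa [Matrix.conjTranspose_eq_transpose_of_trivial] using
        Matrix.isHermitian_conjTranspose_mul_self M).eigenvalues i)).getD (k - 1) 0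

/-- Spectral norm: the largest singular value. -/
def spec {n : ℕ} (M : Matrix (Fin n) (Fin n) ℝ) : ℝ := sval M 1

/-- Maximum row sum `δ(M)`. -/
def delta {n : ℕ} (M : Matrix (Fin n) (Fin n) ℝ) : ℝ := ⨆ i, ∑ j, M i j

/-- `γ₁(M) = min_{i ≤ d} (σ_i(M) − σ_{i+1}(M)) / δ(M)`. -/
def gamma1 {n : ℕ} (M : Matrix (Fin n) (Fin n) ℝ) (d : ℕ) : ℝ :=
  ⨅ i : Fin d, (sval M (i.1 + 1) - sval M (i.1 + 2)) / delta M

/-- `γ₂(M) = (σ_d(M) − σ_{d+1}(M)) / δ(M)`. -/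
def gamma2 {n : ℕ} (M : Matrix (Fin n) (Fin n) ℝ) (d : ℕ) : ℝ :=
  (sval M d - sval M (d + 1)) / delta M

/-- Orthogonal matrix predicate. -/
def IsOrtho {d : ℕ} (W : Matrix (Fin d) (Fin d) ℝ) : Prop :=
  W * Wᵀ = 1 ∧ Wᵀ * W = 1

/-- `min_{W ∈ O(d)} ‖X W − Y‖_F` (as an infimum). -/
def procrustes {n d : ℕ} (X Y : Matrix (Fin n) (Fin d) ℝ) : ℝ :=
  ⨅ W : {W : Matrix (Fin d) (Fin d) ℝ // IsOrtho W}, frob (X * W.1 - Y)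

/-- A latent position matrix: `X Xᵀ` has entries in `[0,1]` and `X` has full column rank `d`. -/
def IsLatentPos {n d : ℕ} (X : Matrix (Fin n) (Fin d) ℝ) : Prop :=
  (∀ i j, (X * Xᵀ) i j ∈ Set.Icc (0 : ℝ) 1) ∧ X.rank = d

/-- `A ~ RDPG(X)` with `P = X Xᵀ`: a random symmetric hollow 0/1 matrix whose
upper-triangular entries are independent Bernoulli with success probabilities `P i j`. -/
def IsRDPG {Ω : Type*} [MeasurableSpace Ω] (μ : Measure Ω) {n : ℕ}
    (P : Matrix (Fin n) (Fin n) ℝ) (A : Ω → Matrix (Fin n) (Fin n) ℝ) : Prop :=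
  (∀ ω, (A ω)ᵀ = A ω) ∧
  (∀ ω i, A ω i i = 0) ∧
  (∀ ω i j, A ω i j = 0 ∨ A ω i j = 1) ∧
  (∀ i j, Measurable fun ω => A ω i j) ∧
  iIndepFun
    (fun (p : {p : Fin n × Fin n // p.1 < p.2}) ω => A ω p.1.1 p.1.2) μ ∧
  (∀ i j : Fin n, i < j → μ {ω | A ω i j = 1} = ENNReal.ofReal (P i j))

/-- The positive semidefinite square root `|A| = (Aᵀ A)^{1/2}`. -/
def absMat {n : ℕ} (A : Matrix (Fin n) (Fin n) ℝ) : Matrix (Fin n) (Fin n) ℝ :=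
  (Matrix.posSemidef_conjTranspose_mul_self A).1.eigenvectorUnitary.1 *
    Matrix.diagonal ((↑) ∘ Real.sqrt ∘ (Matrix.posSemidef_conjTranspose_mul_self A).1.eigenvalues) *
    (star (Matrix.posSemidef_conjTranspose_mul_self A).1.eigenvectorUnitary : Matrix (Fin n) (Fin n) ℝ)

/-- `U` is an `n × d` matrix of orthonormal eigenvectors of `M` for the eigenvalues
`σ₁(M) ≥ ⋯ ≥ σ_d(M)`. -/
def IsTopEigvecs {n : ℕ} (d : ℕ) (M : Matrix (Fin n) (Fin n) ℝ)
    (U : Matrix (Fin n) (Fin d) ℝ) : Prop :=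
  Uᵀ * U = 1 ∧
  ∀ j : Fin d, M *ᵥ (fun i => U i j) = sval M (j.1 + 1) • (fun i => U i j)

/-- `Xh` is an adjacency spectral embedding of `A` into `ℝ^d`:
`Xh = U_A S_A^{1/2}` for some top-`d` orthonormal eigenvector matrix `U_A` of `|A|`. -/
def IsASE {n d : ℕ} (A : Matrix (Fin n) (Fin n) ℝ) (Xh : Matrix (Fin n) (Fin d) ℝ) : Prop :=
  ∃ U : Matrix (Fin n) (Fin d) ℝ, IsTopEigvecs d (absMat A) U ∧
    Xh = U * Matrix.diagonal (fun j : Fin d => Real.sqrt (sval A (j.1 + 1)))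

/-- The diagonal matrix `D` with `D_ii = ∑_{k ≠ i} P_ik (1 − P_ik)`. -/
def Dmat {n : ℕ} (P : Matrix (Fin n) (Fin n) ℝ) : Matrix (Fin n) (Fin n) ℝ :=
  Matrix.diagonal fun i => ∑ k, if k = i then 0 else P i k * (1 - P i k)

/-- The diagonal matrix `S_M^{-1/2}` of inverse square roots of the top-`d`
singular values of `M`. -/
def SinvHalf {n : ℕ} (d : ℕ) (M : Matrix (Fin n) (Fin n) ℝ) : Matrix (Fin d) (Fin d) ℝ :=
  Matrix.diagonal fun j : Fin d => (Real.sqrt (sval M (j.1 + 1)))⁻¹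

/-- `C(X) = (tr S_P^{-1/2} U_Pᵀ E[(A − P)²] U_P S_P^{-1/2})^{1/2}`, where
`E[(A − P)²] = Dmat P`. -/
def CX {n d : ℕ} (P : Matrix (Fin n) (Fin n) ℝ) (U : Matrix (Fin n) (Fin d) ℝ) : ℝ :=
  Real.sqrt (SinvHalf d P * Uᵀ * Dmat P * U * SinvHalf d P).trace

/-- `P` has `d` distinct positive eigenvalues (and the rest are zero). -/
def DistinctPosEigs {n : ℕ} (P : Matrix (Fin n) (Fin n) ℝ) (d : ℕ) : Prop :=
  (∀ i : ℕ, 1 ≤ i → i < d → sval P (i + 1) < sval P i) ∧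
  0 < sval P d ∧ sval P (d + 1) = 0

/-- Assumption 1 on a sequence of edge-probability matrices. -/
def Assumption1 (d : ℕ) (P : (n : ℕ) → Matrix (Fin n) (Fin n) ℝ) : Prop :=
  (∀ n, (P n).rank = d ∧ DistinctPosEigs (P n) d) ∧
  ∃ ε > (0 : ℝ), ∃ c₀ > (0 : ℝ), ∃ n₀ : ℕ, ∀ n, n₀ ≤ n →
    c₀ < gamma1 (P n) d ∧ (Real.log n) ^ ((2 : ℝ) + ε) < delta (P n)

/-- Euclidean norm of the `i`-th row of `Z`. -/
def rowNorm {n d : ℕ} (Z : Matrix (Fin n) (Fin d) ℝ) (i : Fin n) : ℝ :=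
  Real.sqrt (∑ j, (Z i j) ^ 2)

/-- `𝒫(Z)`: project each row of `Z` onto the unit sphere. -/
def rowNormalize {n d : ℕ} (Z : Matrix (Fin n) (Fin d) ℝ) : Matrix (Fin n) (Fin d) ℝ :=
  fun i j => Z i j / rowNorm Z i

/-- `‖𝒟(Z)^{-1}‖ = 1 / min_i ‖Z_i‖`. -/
def invMinRow {n d : ℕ} (Z : Matrix (Fin n) (Fin d) ℝ) : ℝ :=
  (⨅ i, rowNorm Z i)⁻¹

/-- Assumption 2 on a sequence of latent position matrices. -/
def Assumption2 (d : ℕ) (X : (n : ℕ) → Matrix (Fin n) (Fin d) ℝ) : Prop :=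
  (∀ n, (X n * (X n)ᵀ).rank = d) ∧
  ∃ ε₁ > (0 : ℝ), ∃ ε₂ > (0 : ℝ), ∃ c₀ > (0 : ℝ), ∃ n₀ : ℕ, ∀ n, n₀ ≤ n →
    c₀ < gamma1 (X n * (X n)ᵀ) d ∧
    Real.sqrt n * (Real.log n) ^ (ε₁ : ℝ) < delta (X n * (X n)ᵀ) ∧
    (Real.log n / Real.sqrt (delta (X n * (X n)ᵀ))) ^ ((1 : ℝ) - ε₂) <
      ⨅ i, rowNorm (X n) i

/-- The test statistic for the equality (up to rotation) test. -/
def Tstat {n : ℕ} (d : ℕ) (A B : Matrix (Fin n) (Fin n) ℝ)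
    (Xh Yh : Matrix (Fin n) (Fin d) ℝ) : ℝ :=
  procrustes Xh Yh /
    (Real.sqrt (d * (gamma2 A d)⁻¹) + Real.sqrt (d * (gamma2 B d)⁻¹))

/-- The test statistic for the scaling test. -/
def TstatScale {n : ℕ} (d : ℕ) (A B : Matrix (Fin n) (Fin n) ℝ)
    (Xh Yh : Matrix (Fin n) (Fin d) ℝ) : ℝ :=
  (⨅ W : {W : Matrix (Fin d) (Fin d) ℝ // IsOrtho W},
      frob ((frob Xh)⁻¹ • (Xh * W.1) - (frob Yh)⁻¹ • Yh)) /
  (2 * Real.sqrt (d * (gamma2 A d)⁻¹) / frob Xh +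
    2 * Real.sqrt (d * (gamma2 B d)⁻¹) / frob Yh)

/-- The test statistic for the diagonal-transformation test. -/
def TstatDiag {n : ℕ} (d : ℕ) (A B : Matrix (Fin n) (Fin n) ℝ)
    (Xh Yh : Matrix (Fin n) (Fin d) ℝ) : ℝ :=
  procrustes (rowNormalize Xh) (rowNormalize Yh) /
  (2 * Real.sqrt (d * (gamma2 A d)⁻¹) * invMinRow Xh +
    2 * Real.sqrt (d * (gamma2 B d)⁻¹) * invMinRow Yh)

end

theorem norm_inv_norm_smul_sub_inv_norm_smul_le {E : Type*} [NormedAddCommGroup E]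
    [NormedSpace ℝ E] {u : E} (hu : u ≠ 0) (v : E) :
    ‖‖u‖⁻¹ • u - ‖v‖⁻¹ • v‖ ≤ 2 * ‖u - v‖ / ‖u‖ := by
  have hu' : 0 < ‖u‖ := norm_pos_iff.mpr hu
  have hrescale : ‖(‖u‖⁻¹ - ‖v‖⁻¹) • v‖ ≤ ‖u - v‖ / ‖u‖ := by
    rcases eq_or_ne v 0 with rfl | hv
    · simpa using div_nonneg (norm_nonneg u) hu'.le
    have hv' : 0 < ‖v‖ := norm_pos_iff.mpr hv
    have hscalar : |‖u‖⁻¹ - ‖v‖⁻¹| * ‖v‖ = |‖v‖ - ‖u‖| / ‖u‖ := by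
      rw [show ‖u‖⁻¹ - ‖v‖⁻¹ = (‖v‖ - ‖u‖) / (‖u‖ * ‖v‖) by field_simp, abs_div,
        abs_of_pos (mul_pos hu' hv')]
      field_simp
    rw [norm_smul, Real.norm_eq_abs, hscalar, norm_sub_rev]
    gcongr
    exact abs_norm_sub_norm_le v u
  calc ‖‖u‖⁻¹ • u - ‖v‖⁻¹ • v‖ = ‖‖u‖⁻¹ • (u - v) + (‖u‖⁻¹ - ‖v‖⁻¹) • v‖ := by
        congr 1; module
    _ ≤ ‖u - v‖ / ‖u‖ + ‖u - v‖ / ‖u‖ := by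
        refine norm_add_le_of_le ?_ hrescale
        rw [norm_smul, norm_inv, norm_norm, inv_mul_eq_div]
    _ = 2 * ‖u - v‖ / ‖u‖ := by ring

section RowNorms

variable {n d : ℕ}

theorem rowNorm_eq_norm_toLp (Z : Matrix (Fin n) (Fin d) ℝ) (i : Fin n) :
    rowNorm Z i = ‖(WithLp.toLp 2 (Z i) : EuclideanSpace ℝ (Fin d))‖ := by
  simp [rowNorm, EuclideanSpace.norm_eq]

theorem rowNorm_nonneg (Z : Matrix (Fin n) (Fin d) ℝ) (i : Fin n) : 0 ≤ rowNorm Z i :=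
  Real.sqrt_nonneg _

theorem rowNorm_eq_sqrt_mul_transpose_apply (Z : Matrix (Fin n) (Fin d) ℝ) (i : Fin n) :
    rowNorm Z i = √((Z * Zᵀ) i i) := by
  simp [rowNorm, mul_apply, sq]

theorem frob_eq_sqrt_sum_rowNorm_sq (M : Matrix (Fin n) (Fin d) ℝ) :
    frob M = √(∑ i, rowNorm M i ^ 2) := by
  simp only [frob, rowNorm]
  congr 1
  exact Finset.sum_congr rfl fun i _ => (Real.sq_sqrt (by positivity)).symm

theorem frob_le_of_rowNorm_le {M N : Matrix (Fin n) (Fin d) ℝ} {c : ℝ} (hc : 0 ≤ c)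
    (h : ∀ i, rowNorm M i ≤ c * rowNorm N i) : frob M ≤ c * frob N := by
  rw [frob_eq_sqrt_sum_rowNorm_sq, frob_eq_sqrt_sum_rowNorm_sq, ← Real.sqrt_sq hc,
    ← Real.sqrt_mul (sq_nonneg c), Finset.mul_sum]
  gcongr with i
  rw [← mul_pow]
  exact pow_le_pow_left₀ (rowNorm_nonneg M i) (h i) 2

theorem rowNorm_mul_of_mul_transpose_eq_one {W : Matrix (Fin d) (Fin d) ℝ} (hW : W * Wᵀ = 1)
    (Z : Matrix (Fin n) (Fin d) ℝ) (i : Fin n) : rowNorm (Z * W) i = rowNorm Z i := by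
  rw [rowNorm_eq_sqrt_mul_transpose_apply, rowNorm_eq_sqrt_mul_transpose_apply, transpose_mul,
    Matrix.mul_assoc, ← Matrix.mul_assoc W, hW, Matrix.one_mul]

theorem rowNormalize_mul_of_mul_transpose_eq_one {W : Matrix (Fin d) (Fin d) ℝ}
    (hW : W * Wᵀ = 1) (Z : Matrix (Fin n) (Fin d) ℝ) :
    rowNormalize Z * W = rowNormalize (Z * W) := by
  ext i j
  simp only [rowNormalize, mul_apply, rowNorm_mul_of_mul_transpose_eq_one hW, Finset.sum_div,
    div_mul_eq_mul_div]

theorem toLp_rowNormalize (Z : Matrix (Fin n) (Fin d) ℝ) (i : Fin n) :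
    (WithLp.toLp 2 (rowNormalize Z i) : EuclideanSpace ℝ (Fin d)) =
      (rowNorm Z i)⁻¹ • WithLp.toLp 2 (Z i) := by
  ext j
  simp [rowNormalize, div_eq_inv_mul]

theorem rowNorm_rowNormalize_sub_le {Y Z : Matrix (Fin n) (Fin d) ℝ} {i : Fin n}
    (hY : rowNorm Y i ≠ 0) :
    rowNorm (rowNormalize Y - rowNormalize Z) i ≤ 2 * rowNorm (Y - Z) i / rowNorm Y i := by
  rw [rowNorm_eq_norm_toLp] at hY
  simp only [rowNorm_eq_norm_toLp]
  rw [show (rowNormalize Y - rowNormalize Z) i = rowNormalize Y i - rowNormalize Z i from rfl,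
    show (Y - Z) i = Y i - Z i from rfl, WithLp.toLp_sub, WithLp.toLp_sub, toLp_rowNormalize,
    toLp_rowNormalize, rowNorm_eq_norm_toLp, rowNorm_eq_norm_toLp]
  exact norm_inv_norm_smul_sub_inv_norm_smul_le (norm_ne_zero_iff.mp hY) _

theorem invMinRow_nonneg (Z : Matrix (Fin n) (Fin d) ℝ) : 0 ≤ invMinRow Z :=
  inv_nonneg.mpr (Real.iInf_nonneg (rowNorm_nonneg Z))

theorem inv_rowNorm_le_invMinRow {Z : Matrix (Fin n) (Fin d) ℝ} (hZ : ∀ i, rowNorm Z i ≠ 0)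
    (i : Fin n) : (rowNorm Z i)⁻¹ ≤ invMinRow Z := by
  have : Nonempty (Fin n) := ⟨i⟩
  obtain ⟨i₀, hi₀⟩ := exists_eq_ciInf_of_finite (f := rowNorm Z)
  have hmin : 0 < ⨅ j, rowNorm Z j := hi₀ ▸ (rowNorm_nonneg Z i₀).lt_of_ne' (hZ i₀)
  exact inv_anti₀ hmin (ciInf_le (Finite.bddBelow_range _) i)

end RowNorms

theorem stmt17_general {n d : ℕ}
    (Xh X : Matrix (Fin n) (Fin d) ℝ)
    (hXh : ∀ i, rowNorm Xh i ≠ 0)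
    (W : Matrix (Fin d) (Fin d) ℝ) (hW : IsOrtho W) :
    frob (rowNormalize Xh * W - rowNormalize X) ≤
      2 * frob (Xh * W - X) * invMinRow Xh := by
  rw [rowNormalize_mul_of_mul_transpose_eq_one hW.1, mul_right_comm]
  refine frob_le_of_rowNorm_le (mul_nonneg zero_le_two (invMinRow_nonneg Xh)) fun i => ?_
  have hrow := rowNorm_mul_of_mul_transpose_eq_one hW.1 Xh i
  calc rowNorm (rowNormalize (Xh * W) - rowNormalize X) i
      ≤ 2 * rowNorm (Xh * W - X) i / rowNorm (Xh * W) i :=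
        rowNorm_rowNormalize_sub_le (hrow ▸ hXh i)
    _ = 2 * (rowNorm Xh i)⁻¹ * rowNorm (Xh * W - X) i := by rw [hrow]; ring
    _ ≤ 2 * invMinRow Xh * rowNorm (Xh * W - X) i := by
        gcongr
        · exact rowNorm_nonneg _ i
        · exact inv_rowNorm_le_invMinRow hXh i

/-- Eq. `eq:projection-bound`: for matrices with nonzero rows and
`W` orthogonal, `‖𝒫(X̂) W − 𝒫(X)‖_F ≤ 2 ‖X̂ W − X‖_F ‖𝒟(X̂)^{-1}‖`. -/
theorem stmt17 {n d : ℕ}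
    (Xh X : Matrix (Fin n) (Fin d) ℝ)
    (hXh : ∀ i, rowNorm Xh i ≠ 0) (hX : ∀ i, rowNorm X i ≠ 0)
    (W : Matrix (Fin d) (Fin d) ℝ) (hW : IsOrtho W) :
    frob (rowNormalize Xh * W - rowNormalize X) ≤
      2 * frob (Xh * W - X) * invMinRow Xh :=
  stmt17_general Xh X hXh W hW
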